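/- Let k be a field of characteristic zero, let Ω be a k-vector space of finite dimension n ≥ 2, let ⋆ ∈ Ω with (⋆⊗⋆, ⋆⊗⋆) ∈ Λ, where Λ is a subspace of (Ω⊗Ω) ⊕ (Ω⊗Ω), and suppose some unit action (α, β) for ⋆ is coherent with Λ. Then for every ψ ∈ Ω* with (ψ⊗ψ, ψ⊗ψ) ∈ Λ^⊥ and every pair of linear maps α', β' : Ω* → k with α'(ψ) = β'(ψ) = 1, the pair (α', β') is not coherent with Λ^⊥ for the distinguished element ψ; that is, some element of Λ^⊥ ⊆ (Ω*⊗Ω*) ⊕ (Ω*⊗Ω*) fails at least one of the coherence equations (C1)–(C5) for (α', β', ψ). -/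
import Mathlib


open TensorProduct

section Defs

variable {k : Type*} [Field k]

noncomputable def contrL {Ω : Type*} [AddCommGroup Ω] [Module k Ω]
    (φ : Module.Dual k Ω) : Ω ⊗[k] Ω →ₗ[k] Ω :=
  (TensorProduct.lid k Ω).toLinearMap ∘ₗ TensorProduct.map φ LinearMap.id

noncomputable def contrR {Ω : Type*} [AddCommGroup Ω] [Module k Ω]
    (φ : Module.Dual k Ω) : Ω ⊗[k] Ω →ₗ[k] Ω :=
  (TensorProduct.rid k Ω).toLinearMap ∘ₗ TensorProduct.map LinearMap.id φ

noncomputable def contrB {Ω₁ Ω₂ : Type*} [AddCommGroup Ω₁] [Module k Ω₁]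
    [AddCommGroup Ω₂] [Module k Ω₂]
    (φ : Module.Dual k Ω₁) (ψ : Module.Dual k Ω₂) : Ω₁ ⊗[k] Ω₂ →ₗ[k] k :=
  (TensorProduct.lid k k).toLinearMap ∘ₗ TensorProduct.map φ ψ

/-- The coherence equations (C1)-(C5) for a pair `uv ∈ (Ω⊗Ω) × (Ω⊗Ω)`. -/
def CoherenceEqs {Ω : Type*} [AddCommGroup Ω] [Module k Ω]
    (α β : Module.Dual k Ω) (star : Ω)
    (uv : (Ω ⊗[k] Ω) × (Ω ⊗[k] Ω)) : Prop :=
  contrL β uv.1 = contrL β uv.2 ∧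
  contrL α uv.1 = contrR β uv.2 ∧
  contrR α uv.1 = contrR α uv.2 ∧
  contrR β uv.1 = contrB β β uv.2 • star ∧
  contrB α α uv.1 • star = contrL α uv.2

/-- The compatibility equations (C1)-(C3). -/
def CompatEqs {Ω : Type*} [AddCommGroup Ω] [Module k Ω]
    (α β : Module.Dual k Ω)
    (uv : (Ω ⊗[k] Ω) × (Ω ⊗[k] Ω)) : Prop :=
  contrL β uv.1 = contrL β uv.2 ∧
  contrL α uv.1 = contrR β uv.2 ∧
  contrR α uv.1 = contrR α uv.2

def IsCoherent {Ω : Type*} [AddCommGroup Ω] [Module k Ω]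
    (α β : Module.Dual k Ω) (star : Ω)
    (Λ : Submodule k ((Ω ⊗[k] Ω) × (Ω ⊗[k] Ω))) : Prop :=
  ∀ uv ∈ Λ, CoherenceEqs α β star uv

def IsCompatible {Ω : Type*} [AddCommGroup Ω] [Module k Ω]
    (α β : Module.Dual k Ω)
    (Λ : Submodule k ((Ω ⊗[k] Ω) × (Ω ⊗[k] Ω))) : Prop :=
  ∀ uv ∈ Λ, CompatEqs α β uv

end Defs


/-- The annihilator of Λ ⊆ (Ω⊗Ω) ⊕ (Ω⊗Ω) in (Ω*⊗Ω*) ⊕ (Ω*⊗Ω*) under the pairing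
⟨(u,v),(γ,δ)⟩ = ⟨u,γ⟩ − ⟨v,δ⟩. -/
noncomputable def annih {k : Type*} [Field k] {Ω : Type*} [AddCommGroup Ω] [Module k Ω]
    (Λ : Submodule k ((Ω ⊗[k] Ω) × (Ω ⊗[k] Ω))) :
    Submodule k
      ((Module.Dual k Ω ⊗[k] Module.Dual k Ω) × (Module.Dual k Ω ⊗[k] Module.Dual k Ω)) where
  carrier := {gd | ∀ uv ∈ Λ,
    TensorProduct.dualDistrib k Ω Ω gd.1 uv.1 - TensorProduct.dualDistrib k Ω Ω gd.2 uv.2 = 0}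
  add_mem' := by
    intro a b ha hb uv huv
    have h1 := ha uv huv
    have h2 := hb uv huv
    simp only [Prod.fst_add, Prod.snd_add, map_add, LinearMap.add_apply]
    linear_combination h1 + h2
  zero_mem' := by
    intro uv huv
    simp
  smul_mem' := by
    intro c a ha uv huv
    have h1 := ha uv huv
    simp only [Prod.smul_fst, Prod.smul_snd, map_smul, LinearMap.smul_apply, smul_eq_mul]
    linear_combination c * h1

section Aux

variable {k : Type*} [Field k] {Ω : Type*} [AddCommGroup Ω] [Module k Ω]

lemma contrL_tmul (φ : Module.Dual k Ω) (a b : Ω) :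
    contrL φ (a ⊗ₜ[k] b) = φ a • b := by
  simp [contrL]

lemma contrR_tmul (φ : Module.Dual k Ω) (a b : Ω) :
    contrR φ (a ⊗ₜ[k] b) = φ b • a := by
  simp [contrR]

lemma dd_contrL (φ χ : Module.Dual k Ω) (u : Ω ⊗[k] Ω) :
    TensorProduct.dualDistrib k Ω Ω (φ ⊗ₜ[k] χ) u = χ (contrL φ u) := by
  induction u using TensorProduct.induction_on with
  | zero => simp
  | tmul a b => simp [contrL_tmul, mul_comm]
  | add x y hx hy => simp [hx, hy]

lemma dd_contrR (φ χ : Module.Dual k Ω) (u : Ω ⊗[k] Ω) :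
    TensorProduct.dualDistrib k Ω Ω (χ ⊗ₜ[k] φ) u = χ (contrR φ u) := by
  induction u using TensorProduct.induction_on with
  | zero => simp
  | tmul a b => simp [contrR_tmul, mul_comm]
  | add x y hx hy => simp [hx, hy]

end Aux

/-- No coherent unit action on the dual operad (Theorem 4.4(2), coherent case). -/
theorem dual_no_coherent_unit_action
    {k : Type*} [Field k] [CharZero k]
    {Ω : Type*} [AddCommGroup Ω] [Module k Ω] [FiniteDimensional k Ω]
    (n : ℕ) (hn : 2 ≤ n) (hdim : Module.finrank k Ω = n)
    (star : Ω) (Λ : Submodule k ((Ω ⊗[k] Ω) × (Ω ⊗[k] Ω)))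
    (hstar : (star ⊗ₜ[k] star, star ⊗ₜ[k] star) ∈ Λ)
    (α β : Module.Dual k Ω) (hα : α star = 1) (hβ : β star = 1)
    (hcoh : IsCoherent α β star Λ) :
    ∀ ψ : Module.Dual k Ω, (ψ ⊗ₜ[k] ψ, ψ ⊗ₜ[k] ψ) ∈ annih Λ →
      ∀ α' β' : Module.Dual k (Module.Dual k Ω), α' ψ = 1 → β' ψ = 1 →
        ¬ IsCoherent α' β' ψ (annih Λ) := by
  intro ψ hψ α' β' hα' hβ' hcoh'
  -- For each ξ, the element (α ⊗ ξ, ξ ⊗ β) lies in annih Λ (from C2 of coherence).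
  have hmem : ∀ ξ : Module.Dual k Ω, (α ⊗ₜ[k] ξ, ξ ⊗ₜ[k] β) ∈ annih Λ := by
    intro ξ uv huv
    have h2 := (hcoh uv huv).2.1
    rw [dd_contrL α ξ, dd_contrR β ξ, h2, sub_self]
  -- C1 of the dual coherence gives β'(α) • ξ = β'(ξ) • β for all ξ.
  have key : ∀ ξ : Module.Dual k Ω, β' α • ξ = β' ξ • β := by
    intro ξ
    have h1 := (hcoh' _ (hmem ξ)).1
    simpa [contrL_tmul] using h1
  -- β ≠ 0
  have hβne : β ≠ 0 := by
    intro h; rw [h] at hβ; simp at hβ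
  -- pick ξ₀ ∉ span {β}
  obtain ⟨ξ₀, hξ₀⟩ : ∃ ξ₀ : Module.Dual k Ω, ξ₀ ∉ Submodule.span k {β} := by
    by_contra h
    push_neg at h
    have htop : Submodule.span k {β} = (⊤ : Submodule k (Module.Dual k Ω)) :=
      Submodule.eq_top_iff'.mpr h
    have h1 : Module.finrank k (Submodule.span k {β}) = 1 :=
      finrank_span_singleton hβne
    rw [htop, finrank_top, Subspace.dual_finrank_eq, hdim] at h1
    omega
  -- β'(α) = 0
  have hβ'α : β' α = 0 := by
    by_contra h
    have : ξ₀ = (β' α)⁻¹ • (β' ξ₀ • β) := by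
      rw [← key ξ₀, smul_smul, inv_mul_cancel₀ h, one_smul]
    exact hξ₀ (this ▸ Submodule.smul_mem _ _
      (Submodule.smul_mem _ _ (Submodule.mem_span_singleton_self β)))
  -- apply key to ψ : 0 = β'(ψ) • β = β, contradiction
  have := key ψ
  rw [hβ'α, hβ', zero_smul, one_smul] at this
  exact hβne this.symm
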